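/- For every integer n ≥ 4, the polynomial Q_n(x) = x^n − 2(n−1)·Σ_{j=1}^{n−1} x^j + 1 satisfies Q_n(2n−1 − 1/(2n−1)^{n−2}) < 0. -/

import Mathlib

open Polynomial in
/-- The polynomial `Q_n(x) = x^n − 2(n−1)·Σ_{j=1}^{n−1} x^j + 1`. -/
noncomputable def Qpoly (n : ℕ) : Polynomial ℝ :=
  X ^ n - C (2 * ((n : ℝ) - 1)) * (∑ j ∈ Finset.Icc 1 (n - 1), X ^ j) + 1

/-!
With `M = 2n − 1`, summing the geometric series gives
`(x − 1) Q_n(x) = xⁿ (x − M) + M x − 1`. At `x = M − ε` with `ε = M^{-(n-2)}` the first term is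
`−ε xⁿ`, and the Bernoulli-type bound `xⁿ ≥ Mⁿ − n ε M^{n−1}` makes it at most `−M² + n M ε`.
Hence `(x − 1) Q_n(x) ≤ (n − 1) M ε − 1`, which is negative because `(n − 1) M < M^{n−2}` once
`n ≥ 4`.
-/

open Polynomial in
theorem Qpoly_eval_mul_sub_one (n : ℕ) (hn : 1 ≤ n) (x : ℝ) :
    (Qpoly n).eval x * (x - 1) = x ^ n * (x - (2 * n - 1)) + (2 * n - 1) * x - 1 := by
  have hgeom : (∑ j ∈ Finset.Icc 1 (n - 1), x ^ j) * (x - 1) = x ^ n - x := by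
    rw [← Finset.Ico_add_one_right_eq_Icc, Nat.sub_add_cancel hn, geom_sum_Ico_mul x hn, pow_one]
  simp only [Qpoly, eval_add, eval_sub, eval_mul, eval_pow, eval_C, eval_X, eval_one,
    eval_finsetSum]
  linear_combination (-(2 * ((n : ℝ) - 1))) * hgeom

theorem pow_sub_mul_sub_add_mul_sub_one_neg {M ε : ℝ} {m : ℕ} (hε₀ : 0 < ε) (hεM : ε ≤ M)
    (hε : ε * M ^ m = 1) (hM : (m + 1) * M < M ^ m) :
    (M - ε) ^ (m + 2) * (M - ε - M) + M * (M - ε) - 1 < 0 := by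
  have hM₀ : 0 ≤ M := hε₀.le.trans hεM
  have hbernoulli : M ^ (m + 2) - (m + 2) * ε * M ^ (m + 1) ≤ (M - ε) ^ (m + 2) := by
    have h := (le_abs_self _).trans (abs_pow_sub_pow_le M (M - ε) (m + 2))
    rw [sub_sub_cancel, abs_of_pos hε₀, abs_of_nonneg hM₀, abs_of_nonneg (sub_nonneg.2 hεM),
      max_eq_left (by linarith), show m + 2 - 1 = m + 1 by omega] at h
    push_cast at h
    linarith
  have hsmall : (m + 1) * M * ε < 1 :=
    calc (m + 1) * M * ε < M ^ m * ε := mul_lt_mul_of_pos_right hM hε₀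
      _ = 1 := by rw [mul_comm, hε]
  have hεM2 : ε * M ^ (m + 2) = M ^ 2 := by rw [pow_add, ← mul_assoc, hε, one_mul]
  have hεM1 : ε * M ^ (m + 1) = M := by rw [pow_succ, ← mul_assoc, hε, one_mul]
  have hlower : M ^ 2 - (m + 2) * M * ε ≤ ε * (M - ε) ^ (m + 2) :=
    calc M ^ 2 - (m + 2) * M * ε = ε * (M ^ (m + 2) - (m + 2) * ε * M ^ (m + 1)) := by
          linear_combination (m + 2) * ε * hεM1 - hεM2
      _ ≤ ε * (M - ε) ^ (m + 2) := mul_le_mul_of_nonneg_left hbernoulli hε₀.le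
  linarith

theorem succ_mul_lt_pow {M : ℝ} {m : ℕ} (hm : 2 ≤ m) (hM : (m : ℝ) + 1 < M) :
    (m + 1) * M < M ^ m :=
  calc (m + 1) * M < M * M := by gcongr; linarith
    _ = M ^ 2 := (sq M).symm
    _ ≤ M ^ m := pow_le_pow_right₀ (by linarith) hm

theorem stmt18 (n : ℕ) (hn : 4 ≤ n) :
    (Qpoly n).eval (2 * (n : ℝ) - 1 - 1 / (2 * (n : ℝ) - 1) ^ (n - 2)) < 0 := by
  obtain ⟨m, rfl⟩ : ∃ m, n = m + 2 := ⟨n - 2, by omega⟩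
  rw [Nat.add_sub_cancel]
  set M : ℝ := 2 * ((m + 2 : ℕ) : ℝ) - 1 with hMdef
  have hM : (m : ℝ) + 1 < M := by rw [hMdef]; push_cast; linarith
  have hm : (2 : ℝ) ≤ m := by exact_mod_cast (by omega : 2 ≤ m)
  have hM₁ : 2 ≤ M := by linarith
  have hMpow : 0 < M ^ m := by positivity
  set ε : ℝ := 1 / M ^ m
  have hε₀ : 0 < ε := by positivity
  have hε₁ : ε ≤ 1 := div_le_one_of_le₀ (one_le_pow₀ (by linarith)) hMpow.le
  have hε : ε * M ^ m = 1 := one_div_mul_cancel hMpow.ne'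
  have hprod := Qpoly_eval_mul_sub_one (m + 2) (by omega) (M - ε)
  rw [← hMdef] at hprod
  have hneg := pow_sub_mul_sub_add_mul_sub_one_neg hε₀ (by linarith) hε
    (succ_mul_lt_pow (by omega) hM)
  exact neg_of_mul_neg_left (hprod ▸ hneg) (by linarith)
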